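/- Let k₁,k₂>0, K≥2, J(z)=k₁/z¹²−k₂/z⁶ for z>0 and +∞ for z≤0, J_j(z):=J(jz), δ₁:=(2k₁/k₂)^{1/6}, γ:=(2k₁/k₂)^{1/6}·((Σ_{j=1}^K j^{-12})/(Σ_{j=1}^K j^{-6}))^{1/6}, and c_j:=−jJ'(jγ)/J'(γ) for j=2,…,K. For j=2,…,K define J_{0,j}(z):=J_j(z)+(c_j/j)·inf{Σ_{s=1}^j J_1(z_s) : z_1,…,z_j∈ℝ, Σ_{s=1}^j z_s=jz} and ψ_j(z):=J_j(z)+c_j J_1(z). Then for every j=2,…,K: J_{0,j}(z)=ψ_j(z) for all z≤δ₁, and γ is the unique minimizer of J_{0,j} over ℝ. -/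

import Mathlib

/-!
For `0 < z ≤ δ₁` the tangent line of `J` at `z` lies below `J` on all of `(0, ∞)`, so equal
splitting `z_s = z` attains the infimum and `J_{0,j} = J_j + c_j J = ψ_j`; for `z ≤ 0` both
sides are `+∞`. For `z > 0`, `ψ_j(z) = A/z¹² - B/z⁶` with `A = k₁(j⁻¹² + c_j)` and
`B = k₂(j⁻⁶ + c_j)` is again a Lennard-Jones potential, and `c_j = -jJ'(jγ)/J'(γ)` is exactly
the choice making `ψ_j'(γ) = 0`; as `γ < δ₁ < jγ`, `c_j > 0`, so `γ` is the unique minimizer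
of `ψ_j` on `(0, ∞)`. Beyond `δ₁`, `J_j` is increasing and the infimum is at least
`j J(δ₁) = j min J`, hence `J_{0,j}(z) ≥ ψ_j(δ₁) > ψ_j(γ) = J_{0,j}(γ)`.
-/

open Filter Finset Set

noncomputable section

/-- The Lennard-Jones potential, extended by `+∞` on `(-∞,0]`. -/
def LJ (k₁ k₂ : ℝ) (z : ℝ) : EReal :=
  if 0 < z then ((k₁ / z ^ 12 - k₂ / z ^ 6 : ℝ) : EReal) else ⊤

/-- The real-valued Lennard-Jones formula (used for derivatives on `(0,∞)`). -/
def LJr (k₁ k₂ : ℝ) (z : ℝ) : ℝ := k₁ / z ^ 12 - k₂ / z ^ 6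

/-- The unique minimizer of the Lennard-Jones potential. -/
def delta1 (k₁ k₂ : ℝ) : ℝ := (2 * k₁ / k₂) ^ ((1 : ℝ) / 6)

/-- The unique minimizer `γ` of the Cauchy–Born energy density `J_CB(z)=Σ_{j=1}^K J(jz)`. -/
def gammaLJ (k₁ k₂ : ℝ) (K : ℕ) : ℝ :=
  (2 * k₁ / k₂) ^ ((1 : ℝ) / 6) *
    ((∑ j ∈ Finset.Icc 1 K, 1 / (j : ℝ) ^ 12) /
      (∑ j ∈ Finset.Icc 1 K, 1 / (j : ℝ) ^ 6)) ^ ((1 : ℝ) / 6)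

/-- The splitting coefficients `c_j := -j·J'(jγ)/J'(γ)`, `j = 2,…,K`. -/
def cLJ (k₁ k₂ : ℝ) (K : ℕ) (j : ℕ) : ℝ :=
  -((j : ℝ) * deriv (LJr k₁ k₂) ((j : ℝ) * gammaLJ k₁ k₂ K)) /
    deriv (LJr k₁ k₂) (gammaLJ k₁ k₂ K)

/-- `inf{Σ_{s=1}^j J_1(z_s) : Σ_{s=1}^j z_s = jz}`. -/
def infConv (k₁ k₂ : ℝ) (j : ℕ) (z : ℝ) : EReal :=
  sInf {y : EReal | ∃ p : Fin j → ℝ, (∑ s, p s) = j * z ∧ y = ∑ s, LJ k₁ k₂ (p s)}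

/-- The effective potential `J_{0,j}(z) = J_j(z) + (c_j/j)·inf{Σ J_1(z_s) : Σ z_s = jz}`. -/
def J0LJ (k₁ k₂ : ℝ) (K j : ℕ) (z : ℝ) : EReal :=
  LJ k₁ k₂ ((j : ℝ) * z) + ((cLJ k₁ k₂ K j / j : ℝ) : EReal) * infConv k₁ k₂ j z

/-- `ψ_j(z) = J_j(z) + c_j·J_1(z)`. -/
def psiLJ (k₁ k₂ : ℝ) (K j : ℕ) (z : ℝ) : EReal :=
  LJ k₁ k₂ ((j : ℝ) * z) + ((cLJ k₁ k₂ K j : ℝ) : EReal) * LJ k₁ k₂ z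

variable {k₁ k₂ : ℝ}

lemma deriv_LJr (k₁ k₂ : ℝ) {x : ℝ} (hx : x ≠ 0) :
    deriv (LJr k₁ k₂) x = 6 * (k₂ * x ^ 6 - 2 * k₁) / x ^ 13 := by
  have h₁ := (hasDerivAt_pow 12 x).inv (pow_ne_zero 12 hx) |>.const_mul k₁
  have h₂ := (hasDerivAt_pow 6 x).inv (pow_ne_zero 6 hx) |>.const_mul k₂
  have h := (h₁.sub h₂).congr_of_eventuallyEq (f₁ := LJr k₁ k₂)
    (.of_forall fun z ↦ by simp [LJr, div_eq_mul_inv])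
  rw [h.deriv]
  field_simp
  ring

lemma deriv_LJr_neg {x : ℝ} (hx : 0 < x) (h : k₂ * x ^ 6 < 2 * k₁) : deriv (LJr k₁ k₂) x < 0 := by
  rw [deriv_LJr _ _ hx.ne']
  exact div_neg_of_neg_of_pos (by linarith) (by positivity)

lemma deriv_LJr_pos {x : ℝ} (hx : 0 < x) (h : 2 * k₁ < k₂ * x ^ 6) : 0 < deriv (LJr k₁ k₂) x := by
  rw [deriv_LJr _ _ hx.ne']
  exact div_pos (by linarith) (by positivity)

lemma LJr_mul_add_mul (k₁ k₂ t c z : ℝ) :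
    LJr k₁ k₂ (t * z) + c * LJr k₁ k₂ z = LJr (k₁ * (1 / t ^ 12 + c)) (k₂ * (1 / t ^ 6 + c)) z := by
  simp only [LJr, mul_pow, div_eq_mul_inv, mul_inv]
  ring

lemma deriv_LJr_mul_add_mul (k₁ k₂ c : ℝ) {t x : ℝ} (ht : t ≠ 0) (hx : x ≠ 0) :
    deriv (LJr (k₁ * (1 / t ^ 12 + c)) (k₂ * (1 / t ^ 6 + c))) x
      = t * deriv (LJr k₁ k₂) (t * x) + c * deriv (LJr k₁ k₂) x := by
  rw [deriv_LJr _ _ hx, deriv_LJr _ _ (mul_ne_zero ht hx), deriv_LJr _ _ hx]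
  field_simp
  ring

lemma LJr_add_sq_div (k₁ k₂ : ℝ) (hk₁ : k₁ ≠ 0) {x : ℝ} (hx : x ≠ 0) :
    LJr k₁ k₂ x + k₂ ^ 2 / (4 * k₁) = (2 * k₁ - k₂ * x ^ 6) ^ 2 / (4 * k₁ * x ^ 12) := by
  rw [LJr]
  field_simp
  ring

lemma LJr_of_crit (hk₁ : k₁ ≠ 0) {x : ℝ} (hx : x ≠ 0) (hcrit : k₂ * x ^ 6 = 2 * k₁) :
    LJr k₁ k₂ x = -(k₂ ^ 2 / (4 * k₁)) := by
  have h := LJr_add_sq_div k₁ k₂ hk₁ hx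
  rw [hcrit, sub_self, zero_pow two_ne_zero, zero_div] at h
  linarith

lemma neg_sq_div_le_LJr (hk₁ : 0 < k₁) {x : ℝ} (hx : x ≠ 0) :
    -(k₂ ^ 2 / (4 * k₁)) ≤ LJr k₁ k₂ x := by
  have h := LJr_add_sq_div k₁ k₂ hk₁.ne' hx
  have : 0 ≤ (2 * k₁ - k₂ * x ^ 6) ^ 2 / (4 * k₁ * x ^ 12) := by positivity
  linarith

lemma LJr_le_LJr_of_crit (hk₁ : 0 < k₁) {x y : ℝ} (hx : x ≠ 0) (hy : y ≠ 0)
    (hcrit : k₂ * x ^ 6 = 2 * k₁) : LJr k₁ k₂ x ≤ LJr k₁ k₂ y :=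
  LJr_of_crit hk₁.ne' hx hcrit ▸ neg_sq_div_le_LJr hk₁ hy

lemma LJr_lt_LJr_of_crit (hk₁ : 0 < k₁) {x y : ℝ} (hx : 0 < x) (hy : 0 < y) (hyx : y ≠ x)
    (hcrit : k₂ * x ^ 6 = 2 * k₁) : LJr k₁ k₂ x < LJr k₁ k₂ y := by
  refine (LJr_le_LJr_of_crit hk₁ hx.ne' hy.ne' hcrit).lt_of_ne fun heq ↦ hyx ?_
  have h := LJr_add_sq_div k₁ k₂ hk₁.ne' hy.ne'
  rw [← heq, LJr_of_crit hk₁.ne' hx.ne' hcrit, neg_add_cancel, eq_comm,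
    div_eq_zero_iff, sq_eq_zero_iff, sub_eq_zero] at h
  have hk₂ : k₂ ≠ 0 := by rintro rfl; linarith
  have h6 : y ^ 6 = x ^ 6 := by
    rcases h with h | h
    · exact mul_left_cancel₀ hk₂ (by linarith)
    · exact absurd h (by positivity)
  exact (pow_left_inj₀ hy.le hx.le (by norm_num)).1 h6

/-- In the variable `u = x⁻⁶`, `LJr` is the quadratic `k₁ u² - k₂ u`, decreasing in `u` for
`u ≤ k₂ / (2k₁)`. -/
lemma LJr_le_LJr (hk₁ : 0 < k₁) {w p : ℝ} (hw : 0 < w) (hwp : w ≤ p)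
    (hcrit : 2 * k₁ ≤ k₂ * w ^ 6) : LJr k₁ k₂ w ≤ LJr k₁ k₂ p := by
  have hW : 0 < w ^ 6 := by positivity
  have hWP : w ^ 6 ≤ p ^ 6 := pow_le_pow_left₀ hw.le hwp 6
  have huv : 1 / p ^ 6 ≤ 1 / w ^ 6 := one_div_le_one_div_of_le hW hWP
  have hv : 2 * k₁ * (1 / w ^ 6) ≤ k₂ := by
    rwa [mul_one_div, div_le_iff₀ hW]
  have e : ∀ x, LJr k₁ k₂ x = k₁ * (1 / x ^ 6) ^ 2 - k₂ * (1 / x ^ 6) := fun x ↦ by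
    rw [LJr]; ring
  rw [e, e]
  nlinarith [mul_le_mul_of_nonneg_left huv hk₁.le]

lemma tangent_le_one_div_pow_six {a x : ℝ} (ha : 0 < a) (hx : 0 < x) :
    1 / a ^ 6 - 6 * (x - a) / a ^ 7 ≤ 1 / x ^ 6 := by
  rw [← sub_nonneg]
  have h : 1 / x ^ 6 - (1 / a ^ 6 - 6 * (x - a) / a ^ 7) = (x - a) ^ 2 *
      (6 * x ^ 5 + 5 * x ^ 4 * a + 4 * x ^ 3 * a ^ 2 + 3 * x ^ 2 * a ^ 3 + 2 * x * a ^ 4 + a ^ 5)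
        / (x ^ 6 * a ^ 7) := by
    field_simp
    ring
  rw [h]
  positivity

lemma LJr_tangent_le (hk₁ : 0 ≤ k₁) {a x : ℝ} (ha : 0 < a) (hx : 0 < x)
    (hcrit : k₂ * a ^ 6 ≤ 2 * k₁) :
    LJr k₁ k₂ a + deriv (LJr k₁ k₂) a * (x - a) ≤ LJr k₁ k₂ x := by
  have h : LJr k₁ k₂ x - (LJr k₁ k₂ a + deriv (LJr k₁ k₂) a * (x - a))
      = k₁ * (1 / x ^ 6 - 1 / a ^ 6) ^ 2
        + (2 * k₁ - k₂ * a ^ 6) / a ^ 6 * (1 / x ^ 6 - (1 / a ^ 6 - 6 * (x - a) / a ^ 7)) := by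
    rw [deriv_LJr _ _ ha.ne', LJr, LJr]
    field_simp
    ring
  have hgap := tangent_le_one_div_pow_six ha hx
  have hcoef : 0 ≤ (2 * k₁ - k₂ * a ^ 6) / a ^ 6 := div_nonneg (by linarith) (by positivity)
  nlinarith [sq_nonneg (1 / x ^ 6 - 1 / a ^ 6)]

def invPowSum (n K : ℕ) : ℝ := ∑ j ∈ Icc 1 K, 1 / (j : ℝ) ^ n

lemma invPowSum_nonneg (n K : ℕ) : 0 ≤ invPowSum n K :=
  sum_nonneg fun _ _ ↦ by positivity

lemma one_le_invPowSum (n : ℕ) {K : ℕ} (hK : 1 ≤ K) : 1 ≤ invPowSum n K := by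
  simpa [invPowSum] using single_le_sum (f := fun j : ℕ ↦ 1 / (j : ℝ) ^ n) (fun _ _ ↦ by positivity)
    (mem_Icc.2 ⟨le_rfl, hK⟩)

lemma invPowSum_six_le_two (K : ℕ) : invPowSum 6 K ≤ 2 := by
  calc invPowSum 6 K ≤ ∑ j ∈ Ioo 0 (K + 1), ((j : ℝ) ^ 2)⁻¹ := by
        rw [invPowSum, show Finset.Icc 1 K = Finset.Ioo 0 (K + 1) by ext; simp; omega]
        refine sum_le_sum fun j hj ↦ ?_
        have hj : (1 : ℝ) ≤ j := by exact_mod_cast (mem_Icc.1 hj).1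
        rw [one_div]
        exact inv_anti₀ (by positivity) (pow_le_pow_right₀ hj (by norm_num))
    _ ≤ 2 := (sum_Ioo_inv_sq_le 0 (K + 1)).trans_eq (by norm_num)

lemma invPowSum_twelve_lt_six {K : ℕ} (hK : 2 ≤ K) : invPowSum 12 K < invPowSum 6 K := by
  refine sum_lt_sum (fun j hj ↦ ?_) ⟨2, mem_Icc.2 ⟨by norm_num, hK⟩, by norm_num⟩
  have hj : (1 : ℝ) ≤ j := by exact_mod_cast (mem_Icc.1 hj).1
  exact one_div_le_one_div_of_le (by positivity) (pow_le_pow_right₀ hj (by norm_num))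

lemma rpow_one_div_six_pow {x : ℝ} (hx : 0 ≤ x) : (x ^ ((1 : ℝ) / 6)) ^ 6 = x := by
  rw [← Real.rpow_natCast, ← Real.rpow_mul hx]
  norm_num

lemma gammaLJ_eq (k₁ k₂ : ℝ) (K : ℕ) :
    gammaLJ k₁ k₂ K = delta1 k₁ k₂ * (invPowSum 12 K / invPowSum 6 K) ^ ((1 : ℝ) / 6) :=
  rfl

lemma delta1_pos (hk₁ : 0 < k₁) (hk₂ : 0 < k₂) : 0 < delta1 k₁ k₂ := by
  unfold delta1; positivity

lemma delta1_crit (hk₁ : 0 < k₁) (hk₂ : 0 < k₂) : k₂ * delta1 k₁ k₂ ^ 6 = 2 * k₁ := by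
  rw [delta1, rpow_one_div_six_pow (by positivity)]
  field_simp

lemma invPowSum_ratio_pos {K : ℕ} (hK : 1 ≤ K) : 0 < invPowSum 12 K / invPowSum 6 K :=
  div_pos (one_pos.trans_le (one_le_invPowSum 12 hK)) (one_pos.trans_le (one_le_invPowSum 6 hK))

lemma gammaLJ_pos (hk₁ : 0 < k₁) (hk₂ : 0 < k₂) {K : ℕ} (hK : 1 ≤ K) : 0 < gammaLJ k₁ k₂ K := by
  have := invPowSum_ratio_pos hK
  rw [gammaLJ_eq]
  exact mul_pos (delta1_pos hk₁ hk₂) (by positivity)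

lemma gammaLJ_lt_delta1 (hk₁ : 0 < k₁) (hk₂ : 0 < k₂) {K : ℕ} (hK : 2 ≤ K) :
    gammaLJ k₁ k₂ K < delta1 k₁ k₂ := by
  have hS6 := one_le_invPowSum 6 (by omega : 1 ≤ K)
  rw [gammaLJ_eq]
  refine mul_lt_of_lt_one_right (delta1_pos hk₁ hk₂) (Real.rpow_lt_one ?_ ?_ (by norm_num))
  · exact (invPowSum_ratio_pos (by omega)).le
  · exact (div_lt_one (by linarith)).2 (invPowSum_twelve_lt_six hK)

lemma gammaLJ_crit (hk₁ : 0 < k₁) (hk₂ : 0 < k₂) (K : ℕ) :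
    k₂ * gammaLJ k₁ k₂ K ^ 6 = 2 * k₁ * (invPowSum 12 K / invPowSum 6 K) := by
  have := div_nonneg (invPowSum_nonneg 12 K) (invPowSum_nonneg 6 K)
  rw [gammaLJ_eq, mul_pow, rpow_one_div_six_pow this, ← mul_assoc, delta1_crit hk₁ hk₂]

lemma gammaLJ_crit_lt (hk₁ : 0 < k₁) (hk₂ : 0 < k₂) {K : ℕ} (hK : 2 ≤ K) :
    k₂ * gammaLJ k₁ k₂ K ^ 6 < 2 * k₁ := by
  have hS6 := one_le_invPowSum 6 (by omega : 1 ≤ K)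
  rw [gammaLJ_crit hk₁ hk₂]
  exact mul_lt_of_lt_one_right (by positivity)
    ((div_lt_one (by linarith)).2 (invPowSum_twelve_lt_six hK))

lemma crit_lt_mul_gammaLJ (hk₁ : 0 < k₁) (hk₂ : 0 < k₂) {K j : ℕ} (hK : 1 ≤ K) (hj : 2 ≤ j) :
    2 * k₁ < k₂ * ((j : ℝ) * gammaLJ k₁ k₂ K) ^ 6 := by
  have hρ : 1 / 2 ≤ invPowSum 12 K / invPowSum 6 K := by
    have := invPowSum_six_le_two K
    rw [le_div_iff₀ (one_pos.trans_le (one_le_invPowSum 6 hK))]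
    linarith [one_le_invPowSum 12 hK]
  have hj6 : (64 : ℝ) ≤ (j : ℝ) ^ 6 := by
    have : (2 : ℝ) ≤ j := by exact_mod_cast hj
    calc (64 : ℝ) = 2 ^ 6 := by norm_num
      _ ≤ (j : ℝ) ^ 6 := pow_le_pow_left₀ (by norm_num) this 6
  rw [mul_pow, mul_left_comm, gammaLJ_crit hk₁ hk₂]
  calc 2 * k₁ < 64 * k₁ := by linarith
    _ ≤ (j : ℝ) ^ 6 * (2 * k₁ * (invPowSum 12 K / invPowSum 6 K)) :=
      mul_le_mul hj6 (by nlinarith) hk₁.le (by positivity)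

lemma cLJ_pos (hk₁ : 0 < k₁) (hk₂ : 0 < k₂) {K j : ℕ} (hK : 2 ≤ K) (hj : 2 ≤ j) :
    0 < cLJ k₁ k₂ K j := by
  have hγ := gammaLJ_pos hk₁ hk₂ (by omega : 1 ≤ K)
  have hj' : (0 : ℝ) < j := by exact_mod_cast (by omega : 0 < j)
  refine div_pos_of_neg_of_neg (neg_neg_of_pos (mul_pos hj' ?_)) ?_
  · exact deriv_LJr_pos (by positivity) (crit_lt_mul_gammaLJ hk₁ hk₂ (by omega) hj)
  · exact deriv_LJr_neg hγ (gammaLJ_crit_lt hk₁ hk₂ hK)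

lemma cLJ_crit (hk₁ : 0 < k₁) (hk₂ : 0 < k₂) {K j : ℕ} (hK : 2 ≤ K) (hj : j ≠ 0) :
    k₂ * (1 / (j : ℝ) ^ 6 + cLJ k₁ k₂ K j) * gammaLJ k₁ k₂ K ^ 6
      = 2 * (k₁ * (1 / (j : ℝ) ^ 12 + cLJ k₁ k₂ K j)) := by
  have hγ := gammaLJ_pos hk₁ hk₂ (by omega : 1 ≤ K)
  have hD := (deriv_LJr_neg hγ (gammaLJ_crit_lt hk₁ hk₂ hK)).ne
  have h0 : (j : ℝ) * deriv (LJr k₁ k₂) (j * gammaLJ k₁ k₂ K)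
      + cLJ k₁ k₂ K j * deriv (LJr k₁ k₂) (gammaLJ k₁ k₂ K) = 0 := by
    rw [cLJ]
    field_simp
    ring
  have h := deriv_LJr_mul_add_mul k₁ k₂ (cLJ k₁ k₂ K j) (Nat.cast_ne_zero.2 hj) hγ.ne'
  rw [h0, deriv_LJr _ _ hγ.ne', div_eq_zero_iff] at h
  rcases h with h | h
  · linarith
  · exact absurd h (by positivity)

lemma EReal.coe_finset_sum {ι : Type*} (s : Finset ι) (f : ι → ℝ) :
    ((∑ i ∈ s, f i : ℝ) : EReal) = ∑ i ∈ s, (f i : EReal) :=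
  map_sum (⟨⟨Real.toEReal, EReal.coe_zero⟩, EReal.coe_add⟩ : ℝ →+ EReal) f s

lemma LJ_of_pos {x : ℝ} (hx : 0 < x) : LJ k₁ k₂ x = (LJr k₁ k₂ x : EReal) := by
  rw [LJ, if_pos hx, LJr]

lemma LJ_of_nonpos {x : ℝ} (hx : x ≤ 0) : LJ k₁ k₂ x = ⊤ := if_neg hx.not_gt

lemma LJ_ne_bot (x : ℝ) : LJ k₁ k₂ x ≠ ⊥ := by
  rcases lt_or_ge 0 x with hx | hx
  · rw [LJ_of_pos hx]; exact EReal.coe_ne_bot _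
  · rw [LJ_of_nonpos hx]; exact top_ne_bot

/-- A configuration with nonpositive total length has a nonpositive bond, of energy `⊤`. -/
lemma infConv_of_nonpos {j : ℕ} (hj : 0 < j) {z : ℝ} (hz : z ≤ 0) : infConv k₁ k₂ j z = ⊤ := by
  rw [infConv, sInf_eq_top]
  rintro y ⟨p, hsum, rfl⟩
  obtain ⟨s₀, hs₀⟩ : ∃ s₀, p s₀ ≤ 0 := by
    by_contra! hpos
    have := sum_pos (fun s _ ↦ hpos s) (univ_nonempty_iff.2 ⟨⟨0, hj⟩⟩)
    nlinarith [(Nat.cast_pos.2 hj : (0 : ℝ) < j)]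
  rw [← add_sum_erase _ _ (mem_univ s₀), LJ_of_nonpos hs₀]
  exact EReal.top_add_of_ne_bot <|
    sum_induction _ (· ≠ ⊥) (fun _ _ ha hb ↦ EReal.add_ne_bot_iff.2 ⟨ha, hb⟩) EReal.zero_ne_bot
      fun s _ ↦ LJ_ne_bot _

lemma le_infConv_of_affine_le {u v : ℝ} (h : ∀ x, 0 < x → u + v * x ≤ LJr k₁ k₂ x)
    (j : ℕ) (z : ℝ) : ((j * u + v * (j * z) : ℝ) : EReal) ≤ infConv k₁ k₂ j z := by
  refine le_sInf ?_
  rintro y ⟨p, hsum, rfl⟩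
  have hterm (s : Fin j) : ((u + v * p s : ℝ) : EReal) ≤ LJ k₁ k₂ (p s) := by
    rcases lt_or_ge 0 (p s) with hs | hs
    · rw [LJ_of_pos hs]; exact EReal.coe_le_coe_iff.2 (h _ hs)
    · rw [LJ_of_nonpos hs]; exact le_top
  calc ((j * u + v * (j * z) : ℝ) : EReal) = ((∑ s, (u + v * p s) : ℝ) : EReal) := by
        rw [sum_add_distrib, ← mul_sum, hsum]; simp
    _ = ∑ s, ((u + v * p s : ℝ) : EReal) := EReal.coe_finset_sum _ _
    _ ≤ ∑ s, LJ k₁ k₂ (p s) := sum_le_sum fun s _ ↦ hterm s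

lemma infConv_le (j : ℕ) {z : ℝ} (hz : 0 < z) :
    infConv k₁ k₂ j z ≤ ((j * LJr k₁ k₂ z : ℝ) : EReal) := by
  refine sInf_le ⟨fun _ ↦ z, by simp, ?_⟩
  rw [sum_congr rfl fun _ _ ↦ LJ_of_pos hz, ← EReal.coe_finset_sum]
  simp

lemma infConv_eq_mul_LJ (hk₁ : 0 < k₁) (hk₂ : 0 < k₂) {j : ℕ} (hj : 0 < j) {z : ℝ}
    (hz : z ≤ delta1 k₁ k₂) : infConv k₁ k₂ j z = (j : ℝ) * LJ k₁ k₂ z := by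
  rcases le_or_gt z 0 with hz₀ | hz₀
  · rw [infConv_of_nonpos hj hz₀, LJ_of_nonpos hz₀, EReal.coe_mul_top_of_pos (by positivity)]
  rw [LJ_of_pos hz₀, ← EReal.coe_mul]
  refine le_antisymm (infConv_le j hz₀) ?_
  have hcrit : k₂ * z ^ 6 ≤ 2 * k₁ := by
    rw [← delta1_crit hk₁ hk₂]
    exact mul_le_mul_of_nonneg_left (pow_le_pow_left₀ hz₀.le hz 6) hk₂.le
  set D := deriv (LJr k₁ k₂) z
  have h := le_infConv_of_affine_le (u := LJr k₁ k₂ z - D * z) (v := D)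
    (fun x hx ↦ by linarith [LJr_tangent_le hk₁.le hz₀ hx hcrit]) j z
  rwa [show (j : ℝ) * (LJr k₁ k₂ z - D * z) + D * (j * z) = j * LJr k₁ k₂ z by ring] at h

lemma J0LJ_eq_psiLJ (hk₁ : 0 < k₁) (hk₂ : 0 < k₂) {K j : ℕ} (hj : 0 < j) {z : ℝ}
    (hz : z ≤ delta1 k₁ k₂) : J0LJ k₁ k₂ K j z = psiLJ k₁ k₂ K j z := by
  rw [J0LJ, psiLJ, infConv_eq_mul_LJ hk₁ hk₂ hj hz, ← mul_assoc, ← EReal.coe_mul,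
    div_mul_cancel₀ _ (Nat.cast_ne_zero.2 hj.ne')]

lemma psiLJ_of_pos (K : ℕ) {j : ℕ} (hj : 0 < j) {z : ℝ} (hz : 0 < z) :
    psiLJ k₁ k₂ K j z = (LJr (k₁ * (1 / (j : ℝ) ^ 12 + cLJ k₁ k₂ K j))
      (k₂ * (1 / (j : ℝ) ^ 6 + cLJ k₁ k₂ K j)) z : EReal) := by
  rw [psiLJ, LJ_of_pos (by positivity), LJ_of_pos hz, ← EReal.coe_mul, ← EReal.coe_add,
    LJr_mul_add_mul]

lemma psiLJ_of_nonpos {K j : ℕ} (hc : 0 < cLJ k₁ k₂ K j) {z : ℝ} (hz : z ≤ 0) :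
    psiLJ k₁ k₂ K j z = ⊤ := by
  rw [psiLJ, LJ_of_nonpos hz, LJ_of_nonpos (mul_nonpos_of_nonneg_of_nonpos (by positivity) hz),
    EReal.coe_mul_top_of_pos hc, EReal.top_add_top]

lemma psiLJ_gammaLJ_lt (hk₁ : 0 < k₁) (hk₂ : 0 < k₂) {K j : ℕ} (hK : 2 ≤ K) (hj : 2 ≤ j)
    {z : ℝ} (hz : z ≠ gammaLJ k₁ k₂ K) : psiLJ k₁ k₂ K j (gammaLJ k₁ k₂ K) < psiLJ k₁ k₂ K j z := by
  have hγ := gammaLJ_pos hk₁ hk₂ (by omega : 1 ≤ K)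
  have hc := cLJ_pos hk₁ hk₂ hK hj
  rw [psiLJ_of_pos K (by omega) hγ]
  rcases le_or_gt z 0 with hz₀ | hz₀
  · rw [psiLJ_of_nonpos hc hz₀]
    exact EReal.coe_lt_top _
  · rw [psiLJ_of_pos K (by omega) hz₀]
    exact EReal.coe_lt_coe_iff.2 <| LJr_lt_LJr_of_crit (by positivity) hγ hz₀ hz
      (cLJ_crit hk₁ hk₂ hK (by omega))

lemma psiLJ_delta1_le_J0LJ (hk₁ : 0 < k₁) (hk₂ : 0 < k₂) {K j : ℕ} (hj : 0 < j)
    (hc : 0 ≤ cLJ k₁ k₂ K j) {z : ℝ} (hz : delta1 k₁ k₂ < z) :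
    psiLJ k₁ k₂ K j (delta1 k₁ k₂) ≤ J0LJ k₁ k₂ K j z := by
  set δ := delta1 k₁ k₂
  have hδ : 0 < δ := delta1_pos hk₁ hk₂
  have hj' : (0 : ℝ) < j := Nat.cast_pos.2 hj
  have hbond : LJ k₁ k₂ (j * δ) ≤ LJ k₁ k₂ (j * z) := by
    have hcrit : 2 * k₁ ≤ k₂ * ((j : ℝ) * δ) ^ 6 := by
      rw [mul_pow, mul_left_comm, delta1_crit hk₁ hk₂]
      exact le_mul_of_one_le_left (by positivity) (one_le_pow₀ (by exact_mod_cast hj))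
    rw [LJ_of_pos (by positivity), LJ_of_pos (mul_pos hj' (hδ.trans hz))]
    exact EReal.coe_le_coe_iff.2 <|
      LJr_le_LJr hk₁ (by positivity) (mul_le_mul_of_nonneg_left hz.le hj'.le) hcrit
  have hsplit : ((j * LJr k₁ k₂ δ : ℝ) : EReal) ≤ infConv k₁ k₂ j z := by
    simpa using le_infConv_of_affine_le (u := LJr k₁ k₂ δ) (v := 0)
      (fun x hx ↦ by simpa using LJr_le_LJr_of_crit hk₁ hδ.ne' hx.ne' (delta1_crit hk₁ hk₂)) j z
  rw [psiLJ, J0LJ, LJ_of_pos hδ]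
  refine add_le_add hbond ?_
  calc (cLJ k₁ k₂ K j : EReal) * LJr k₁ k₂ δ
      = ((cLJ k₁ k₂ K j / j : ℝ) : EReal) * ((j * LJr k₁ k₂ δ : ℝ) : EReal) := by
        rw [← EReal.coe_mul, ← EReal.coe_mul]
        congr 1
        field_simp
    _ ≤ _ := mul_le_mul_of_nonneg_left hsplit (EReal.coe_nonneg.2 (div_nonneg hc hj'.le))

theorem effective_potential_eq_psi_and_min (k₁ k₂ : ℝ) (hk₁ : 0 < k₁) (hk₂ : 0 < k₂)
    (K : ℕ) (hK : 2 ≤ K) :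
    ∀ j ∈ Finset.Icc 2 K,
      (∀ z : ℝ, z ≤ delta1 k₁ k₂ → J0LJ k₁ k₂ K j z = psiLJ k₁ k₂ K j z) ∧
      (∀ z : ℝ, J0LJ k₁ k₂ K j (gammaLJ k₁ k₂ K) ≤ J0LJ k₁ k₂ K j z) ∧
      (∀ z : ℝ, J0LJ k₁ k₂ K j z = J0LJ k₁ k₂ K j (gammaLJ k₁ k₂ K) →
        z = gammaLJ k₁ k₂ K) := by
  intro j hj
  have hj2 : 2 ≤ j := (mem_Icc.1 hj).1
  have hγδ := gammaLJ_lt_delta1 hk₁ hk₂ hK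
  have heq (z : ℝ) (hz : z ≤ delta1 k₁ k₂) : J0LJ k₁ k₂ K j z = psiLJ k₁ k₂ K j z :=
    J0LJ_eq_psiLJ hk₁ hk₂ (by omega) hz
  have hlt (z : ℝ) (hz : z ≠ gammaLJ k₁ k₂ K) :
      J0LJ k₁ k₂ K j (gammaLJ k₁ k₂ K) < J0LJ k₁ k₂ K j z := by
    rw [heq _ hγδ.le]
    rcases le_or_gt z (delta1 k₁ k₂) with hzδ | hzδ
    · rw [heq z hzδ]
      exact psiLJ_gammaLJ_lt hk₁ hk₂ hK hj2 hz
    · exact (psiLJ_gammaLJ_lt hk₁ hk₂ hK hj2 hγδ.ne').trans_le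
        (psiLJ_delta1_le_J0LJ hk₁ hk₂ (by omega) (cLJ_pos hk₁ hk₂ hK hj2).le hzδ)
  refine ⟨heq, fun z ↦ ?_, fun z hz ↦ by_contra fun h ↦ (hlt z h).ne' hz⟩
  rcases eq_or_ne z (gammaLJ k₁ k₂ K) with rfl | hz
  exacts [le_rfl, (hlt z hz).le]
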